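/- The pinned processes of the original and closed-loop systems have the same drift and noise covariance (identities (eq:bridge_A) and (eq:bridge_cov) in the proof of Theorem 3, part (ii)): for every k ∈ {0,…,N−1}, (I − B_kB_kᵀΦ(N,k+1)ᵀG_r(N,k)†Φ(N,k+1))A_k = (I − D_kΦ_Q(N,k+1)ᵀG_{Q,r}(N,k)†Φ_Q(N,k+1))A_{Q,k}, and B_kB_kᵀ − B_kB_kᵀΦ(N,k+1)ᵀG_r(N,k)†Φ(N,k+1)B_kB_kᵀ = D_k − D_kΦ_Q(N,k+1)ᵀG_{Q,r}(N,k)†Φ_Q(N,k+1)D_k, where G_r(N,k) := Σ_{s=k}^{N−1}Φ(N,s+1)B_sB_sᵀΦ(N,s+1)ᵀ, G_{Q,r}(N,k) := Σ_{s=k}^{N−1}Φ_Q(N,s+1)D_sΦ_Q(N,s+1)ᵀ, and † denotes the Moore–Penrose inverse. -/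
import Mathlib


open Matrix

noncomputable section

/-- `prodAux A l d = A (l+d-1) * ⋯ * A l` (the empty product for `d = 0`). -/
def prodAux {n : ℕ} (A : ℕ → Matrix (Fin n) (Fin n) ℝ) (l : ℕ) :
    ℕ → Matrix (Fin n) (Fin n) ℝ
  | 0 => 1
  | d + 1 => A (l + d) * prodAux A l d

/-- State-transition matrix `Φ(k,l)`: `A_{k-1} ⋯ A_l` for `k > l`, `I` for `k = l`,
and `A_k⁻¹ ⋯ A_{l-1}⁻¹` for `k < l`. -/
def Phi {n : ℕ} (A : ℕ → Matrix (Fin n) (Fin n) ℝ) (k l : ℕ) :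
    Matrix (Fin n) (Fin n) ℝ :=
  if l ≤ k then prodAux A l (k - l) else (prodAux A k (l - k))⁻¹

/-- Reachability Gramian `G_r(k₁,k₀) = Σ_{k=k₀}^{k₁−1} Φ(k₁,k+1) B_k B_kᵀ Φ(k₁,k+1)ᵀ`. -/
def Gr {n m : ℕ} (A : ℕ → Matrix (Fin n) (Fin n) ℝ) (B : ℕ → Matrix (Fin n) (Fin m) ℝ)
    (k₁ k₀ : ℕ) : Matrix (Fin n) (Fin n) ℝ :=
  ∑ k ∈ Finset.Ico k₀ k₁, Phi A k₁ (k+1) * B k * (B k)ᵀ * (Phi A k₁ (k+1))ᵀ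

/-- Controllability Gramian `G_c(k₁,k₀) = Σ_{k=k₀}^{k₁−1} Φ(k₀,k+1) B_k B_kᵀ Φ(k₀,k+1)ᵀ`. -/
def Gc {n m : ℕ} (A : ℕ → Matrix (Fin n) (Fin n) ℝ) (B : ℕ → Matrix (Fin n) (Fin m) ℝ)
    (k₁ k₀ : ℕ) : Matrix (Fin n) (Fin n) ℝ :=
  ∑ k ∈ Finset.Ico k₀ k₁, Phi A k₀ (k+1) * B k * (B k)ᵀ * (Phi A k₀ (k+1))ᵀ

/-- `H` is the Moore–Penrose inverse of `G`. -/
def IsMoorePenrose {n : ℕ} (G H : Matrix (Fin n) (Fin n) ℝ) : Prop :=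
  G * H * G = G ∧ H * G * H = H ∧ (G * H)ᵀ = G * H ∧ (H * G)ᵀ = H * G

/-- Reachability Gramian with general noise-covariance terms `M k`. -/
def GrM {n : ℕ} (A : ℕ → Matrix (Fin n) (Fin n) ℝ) (M : ℕ → Matrix (Fin n) (Fin n) ℝ)
    (k₁ k₀ : ℕ) : Matrix (Fin n) (Fin n) ℝ :=
  ∑ s ∈ Finset.Ico k₀ k₁, Phi A k₁ (s+1) * M s * (Phi A k₁ (s+1))ᵀ

/-- Controllability Gramian with general noise-covariance terms `M k`. -/
def GcM {n : ℕ} (A : ℕ → Matrix (Fin n) (Fin n) ℝ) (M : ℕ → Matrix (Fin n) (Fin n) ℝ)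
    (k₁ k₀ : ℕ) : Matrix (Fin n) (Fin n) ℝ :=
  ∑ s ∈ Finset.Ico k₀ k₁, Phi A k₀ (s+1) * M s * (Phi A k₀ (s+1))ᵀ

-- ============ auxiliary lemmas ============
section Stmt19Aux

variable {n m : ℕ}

lemma prodAux_succ (A : ℕ → Matrix (Fin n) (Fin n) ℝ) (l d : ℕ) :
    prodAux A (l+1) d * A l = prodAux A l (d+1) := by
  induction d with
  | zero => simp [prodAux]
  | succ d ih =>
      have h1 : l + 1 + d = l + (d + 1) := by omega
      show A (l+1+d) * prodAux A (l+1) d * A l = A (l+(d+1)) * prodAux A l (d+1)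
      rw [Matrix.mul_assoc, ih, h1]

lemma isUnit_det_prodAux (A : ℕ → Matrix (Fin n) (Fin n) ℝ) (l d : ℕ)
    (h : ∀ s, l ≤ s → s < l + d → IsUnit (A s).det) :
    IsUnit (prodAux A l d).det := by
  induction d with
  | zero => simp [prodAux]
  | succ d ih =>
      show IsUnit (A (l+d) * prodAux A l d).det
      rw [Matrix.det_mul]
      exact (h _ (by omega) (by omega)).mul (ih fun s h1 h2 => h s h1 (by omega))

lemma Phi_eq_of_le (A : ℕ → Matrix (Fin n) (Fin n) ℝ) {l k : ℕ} (h : l ≤ k) :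
    Phi A k l = prodAux A l (k - l) := if_pos h

lemma Phi_self (A : ℕ → Matrix (Fin n) (Fin n) ℝ) (k : ℕ) : Phi A k k = 1 := by
  rw [Phi_eq_of_le A le_rfl, Nat.sub_self]; rfl

lemma Phi_mul_A (A : ℕ → Matrix (Fin n) (Fin n) ℝ) {k N : ℕ} (h : k < N) :
    Phi A N (k+1) * A k = Phi A N k := by
  rw [Phi_eq_of_le A h, Phi_eq_of_le A h.le, prodAux_succ]
  have h2 : N - (k+1) + 1 = N - k := by omega
  rw [h2]

lemma isUnit_det_Phi (A : ℕ → Matrix (Fin n) (Fin n) ℝ) {l N : ℕ} (h : l ≤ N)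
    (hA : ∀ s < N, IsUnit (A s).det) : IsUnit (Phi A N l).det := by
  rw [Phi_eq_of_le A h]
  exact isUnit_det_prodAux A l (N - l) fun s h1 h2 => hA s (by omega)

lemma mp_unique {G H K : Matrix (Fin n) (Fin n) ℝ}
    (hH : IsMoorePenrose G H) (hK : IsMoorePenrose G K) : H = K := by
  obtain ⟨h1, h2, h3, h4⟩ := hH
  obtain ⟨k1, k2, k3, k4⟩ := hK
  have e1 : G * H = G * K := by
    calc G * H = (G * H)ᵀ := h3.symm
    _ = ((G * K * G) * H)ᵀ := by rw [k1]
    _ = Hᵀ * (Gᵀ * Kᵀ * Gᵀ) := by simp [Matrix.transpose_mul, Matrix.mul_assoc]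
    _ = (G*H)ᵀ * (G*K)ᵀ := by simp [Matrix.transpose_mul, Matrix.mul_assoc]
    _ = (G*H) * (G*K) := by rw [h3, k3]
    _ = (G * H * G) * K := by simp [Matrix.mul_assoc]
    _ = G * K := by rw [h1]
  have e2 : H * G = K * G := by
    calc H * G = (H * G)ᵀ := h4.symm
    _ = (H * (G * K * G))ᵀ := by rw [k1]
    _ = (Gᵀ * Kᵀ) * (Gᵀ * Hᵀ) := by simp [Matrix.transpose_mul, Matrix.mul_assoc]
    _ = (K*G)ᵀ * (H*G)ᵀ := by simp [Matrix.transpose_mul, Matrix.mul_assoc]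
    _ = (K*G) * (H*G) := by rw [h4, k4]
    _ = K * (G * H * G) := by simp [Matrix.mul_assoc]
    _ = K * G := by rw [h1]
  calc H = H * G * H := h2.symm
  _ = K * G * H := by rw [e2]
  _ = K * (G * H) := by rw [Matrix.mul_assoc]
  _ = K * (G * K) := by rw [e1]
  _ = K * G * K := by rw [Matrix.mul_assoc]
  _ = K := k2

lemma mp_transpose {G H : Matrix (Fin n) (Fin n) ℝ} (hG : Gᵀ = G)
    (hH : IsMoorePenrose G H) : IsMoorePenrose G Hᵀ := by
  obtain ⟨h1, h2, h3, h4⟩ := hH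
  refine ⟨?_, ?_, ?_, ?_⟩
  · calc G * Hᵀ * G = (Gᵀ * H * Gᵀ)ᵀ := by simp [Matrix.transpose_mul, Matrix.mul_assoc]
    _ = (G * H * G)ᵀ := by rw [hG]
    _ = Gᵀ := by rw [h1]
    _ = G := hG
  · calc Hᵀ * G * Hᵀ = Hᵀ * Gᵀ * Hᵀ := by rw [hG]
    _ = (H * G * H)ᵀ := by simp [Matrix.transpose_mul, Matrix.mul_assoc]
    _ = Hᵀ := by rw [h2]
  · calc (G * Hᵀ)ᵀ = H * Gᵀ := by simp [Matrix.transpose_mul]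
    _ = H * G := by rw [hG]
    _ = (H * G)ᵀ := h4.symm
    _ = Gᵀ * Hᵀ := by simp [Matrix.transpose_mul]
    _ = G * Hᵀ := by rw [hG]
  · calc (Hᵀ * G)ᵀ = Gᵀ * H := by simp [Matrix.transpose_mul]
    _ = G * H := by rw [hG]
    _ = (G * H)ᵀ := h3.symm
    _ = Hᵀ * Gᵀ := by simp [Matrix.transpose_mul]
    _ = Hᵀ * G := by rw [hG]

lemma mp_symm {G H : Matrix (Fin n) (Fin n) ℝ} (hG : Gᵀ = G)
    (hH : IsMoorePenrose G H) : Hᵀ = H :=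
  mp_unique (mp_transpose hG hH) hH

lemma sum_gram_zero {ι : Type*} (s : Finset ι) (M : ι → Matrix (Fin n) (Fin m) ℝ)
    (E : Matrix (Fin n) (Fin n) ℝ)
    (h : Eᵀ * (∑ i ∈ s, M i * (M i)ᵀ) * E = 0) :
    ∀ i ∈ s, (M i)ᵀ * E = 0 := by
  have key : ∑ i ∈ s, ((M i)ᵀ * E)ᵀ * ((M i)ᵀ * E) = 0 := by
    rw [← h]
    rw [Finset.mul_sum, Finset.sum_mul]
    refine Finset.sum_congr rfl fun i _ => ?_
    simp [Matrix.transpose_mul, Matrix.mul_assoc]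
  have tr : ∑ i ∈ s, Matrix.trace (((M i)ᵀ * E)ᵀ * ((M i)ᵀ * E)) = 0 := by
    rw [← Matrix.trace_sum, key, Matrix.trace_zero]
  have nonneg : ∀ i ∈ s, 0 ≤ Matrix.trace (((M i)ᵀ * E)ᵀ * ((M i)ᵀ * E)) := by
    intro i _
    unfold Matrix.trace
    refine Finset.sum_nonneg fun j _ => ?_
    simp only [Matrix.diag_apply, Matrix.mul_apply, Matrix.transpose_apply]
    exact Finset.sum_nonneg fun a _ => mul_self_nonneg _
  intro i hi
  have hzero : Matrix.trace (((M i)ᵀ * E)ᵀ * ((M i)ᵀ * E)) = 0 :=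
    (Finset.sum_eq_zero_iff_of_nonneg nonneg).mp tr i hi
  ext a b
  have hsum : ∑ j, (((M i)ᵀ * E)ᵀ * ((M i)ᵀ * E)) j j = 0 := hzero
  have hdiag : ∀ j, (((M i)ᵀ * E)ᵀ * ((M i)ᵀ * E)) j j
      = ∑ c, ((M i)ᵀ * E) c j * ((M i)ᵀ * E) c j := by
    intro j; simp [Matrix.mul_apply, Matrix.transpose_apply, mul_comm]
  rw [Finset.sum_congr rfl (fun j _ => hdiag j)] at hsum
  have hall : ∀ j ∈ (Finset.univ : Finset (Fin n)),
      ∑ c, ((M i)ᵀ * E) c j * ((M i)ᵀ * E) c j = 0 := by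
    refine (Finset.sum_eq_zero_iff_of_nonneg ?_).mp hsum
    exact fun j _ => Finset.sum_nonneg fun c _ => mul_self_nonneg _
  have := (Finset.sum_eq_zero_iff_of_nonneg
      (fun c _ => mul_self_nonneg (((M i)ᵀ * E) c b))).mp
    (hall b (Finset.mem_univ b)) a (Finset.mem_univ a)
  simpa [mul_self_eq_zero] using this

end Stmt19Aux

/-- The pinned processes of the original and closed-loop systems have the same drift and noise covariance. -/
theorem stmt19
    {n m N : ℕ} (hn : 0 < n) (hm : 0 < m) (hN : 0 < N)
    (A : ℕ → Matrix (Fin n) (Fin n) ℝ) (B : ℕ → Matrix (Fin n) (Fin m) ℝ)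
    (hA : ∀ k < N, IsUnit (A k).det)
    (Q : ℕ → Matrix (Fin n) (Fin n) ℝ)
    (hQsym : ∀ k ≤ N, (Q k)ᵀ = Q k) (hQinv : ∀ k ≤ N, IsUnit (Q k).det)
    (hQrec : ∀ k < N, Q (k+1) = A k * Q k * (A k)ᵀ - B k * (B k)ᵀ)
    (hIB : ∀ k < N,
      IsUnit ((1 : Matrix (Fin m) (Fin m) ℝ) + (B k)ᵀ * (Q (k+1))⁻¹ * B k).det)
    (D : ℕ → Matrix (Fin n) (Fin n) ℝ)
    (hD : ∀ k, D k = B k *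
      ((1 : Matrix (Fin m) (Fin m) ℝ) + (B k)ᵀ * (Q (k+1))⁻¹ * B k)⁻¹ * (B k)ᵀ)
    (AQ : ℕ → Matrix (Fin n) (Fin n) ℝ)
    (hAQ : ∀ k, AQ k = A k - B k *
      ((1 : Matrix (Fin m) (Fin m) ℝ) + (B k)ᵀ * (Q (k+1))⁻¹ * B k)⁻¹ *
      (B k)ᵀ * (Q (k+1))⁻¹ * A k)
    -- `Grd k` is the Moore–Penrose inverse of `G_r(N,k)`
    (Grd : ℕ → Matrix (Fin n) (Fin n) ℝ)
    (hGrd : ∀ k < N, IsMoorePenrose (GrM A (fun s => B s * (B s)ᵀ) N k) (Grd k))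
    -- `GQrd k` is the Moore–Penrose inverse of `G_{Q,r}(N,k)`
    (GQrd : ℕ → Matrix (Fin n) (Fin n) ℝ)
    (hGQrd : ∀ k < N, IsMoorePenrose (GrM AQ D N k) (GQrd k)) :
    ∀ k < N,
      ((1 : Matrix (Fin n) (Fin n) ℝ)
          - B k * (B k)ᵀ * (Phi A N (k+1))ᵀ * Grd k * Phi A N (k+1)) * A k
        = ((1 : Matrix (Fin n) (Fin n) ℝ)
          - D k * (Phi AQ N (k+1))ᵀ * GQrd k * Phi AQ N (k+1)) * AQ k ∧
      B k * (B k)ᵀ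
          - B k * (B k)ᵀ * (Phi A N (k+1))ᵀ * Grd k * Phi A N (k+1) * B k * (B k)ᵀ
        = D k - D k * (Phi AQ N (k+1))ᵀ * GQrd k * Phi AQ N (k+1) * D k := by
  intro k hk
  -- ======= generic step facts =======
  have hJsym : ∀ s, s < N → ((1 : Matrix (Fin m) (Fin m) ℝ) + (B s)ᵀ * (Q (s+1))⁻¹ * B s)ᵀ
      = 1 + (B s)ᵀ * (Q (s+1))⁻¹ * B s := by
    intro s hs
    have hq : ((Q (s+1))⁻¹)ᵀ = (Q (s+1))⁻¹ := by
      rw [Matrix.transpose_nonsing_inv, hQsym (s+1) hs]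
    simp [Matrix.transpose_add, Matrix.transpose_mul, Matrix.mul_assoc, hq]
  have hDsym : ∀ s, s < N → (D s)ᵀ = D s := by
    intro s hs
    rw [hD s]
    simp only [Matrix.transpose_mul, Matrix.transpose_nonsing_inv, Matrix.transpose_transpose,
      hJsym s hs]
    simp [Matrix.mul_assoc]
  have hb : ∀ s, s < N → D s + D s * (Q (s+1))⁻¹ * (B s * (B s)ᵀ) = B s * (B s)ᵀ := by
    intro s hs
    have hJ : ((1 : Matrix (Fin m) (Fin m) ℝ) + (B s)ᵀ * (Q (s+1))⁻¹ * B s)⁻¹ *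
        ((1 : Matrix (Fin m) (Fin m) ℝ) + (B s)ᵀ * (Q (s+1))⁻¹ * B s) = 1 :=
      Matrix.nonsing_inv_mul _ (hIB s hs)
    have key : B s * (((1 : Matrix (Fin m) (Fin m) ℝ) + (B s)ᵀ * (Q (s+1))⁻¹ * B s)⁻¹ *
        (((1 : Matrix (Fin m) (Fin m) ℝ) + (B s)ᵀ * (Q (s+1))⁻¹ * B s) * (B s)ᵀ))
        = B s * (B s)ᵀ := by
      rw [← Matrix.mul_assoc (((1 : Matrix (Fin m) (Fin m) ℝ) + (B s)ᵀ * (Q (s+1))⁻¹ * B s)⁻¹),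
        hJ, Matrix.one_mul]
    rw [hD s]
    conv_rhs => rw [← key]
    simp only [Matrix.mul_add, Matrix.add_mul, Matrix.one_mul, Matrix.mul_one, Matrix.mul_assoc]
  have hAQA : ∀ s, s < N → A s * Q s * (A s)ᵀ = Q (s+1) + B s * (B s)ᵀ := by
    intro s hs; rw [hQrec s hs]; noncomm_ring
  have hX : ∀ s, s < N → (1 : Matrix (Fin n) (Fin n) ℝ) - D s * (Q (s+1))⁻¹
      = Q (s+1) * (((A s)ᵀ)⁻¹ * ((Q s)⁻¹ * (A s)⁻¹)) := by
    intro s hs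
    have hq : (Q (s+1))⁻¹ * Q (s+1) = 1 := Matrix.nonsing_inv_mul _ (hQinv (s+1) hs)
    have h1 : ((1 : Matrix (Fin n) (Fin n) ℝ) - D s * (Q (s+1))⁻¹) * (A s * Q s * (A s)ᵀ)
        = Q (s+1) := by
      rw [hAQA s hs]
      calc ((1 : Matrix (Fin n) (Fin n) ℝ) - D s * (Q (s+1))⁻¹) * (Q (s+1) + B s * (B s)ᵀ)
          = Q (s+1) + B s * (B s)ᵀ - D s * ((Q (s+1))⁻¹ * Q (s+1))
            - D s * (Q (s+1))⁻¹ * (B s * (B s)ᵀ) := by noncomm_ring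
        _ = Q (s+1) + B s * (B s)ᵀ - D s - D s * (Q (s+1))⁻¹ * (B s * (B s)ᵀ) := by
            rw [hq, Matrix.mul_one]
        _ = Q (s+1) + B s * (B s)ᵀ - (D s + D s * (Q (s+1))⁻¹ * (B s * (B s)ᵀ)) := by
            noncomm_ring
        _ = Q (s+1) := by rw [hb s hs]; noncomm_ring
    have i1 : (A s)ᵀ * ((A s)ᵀ)⁻¹ = 1 :=
      Matrix.mul_nonsing_inv _ (by rw [Matrix.det_transpose]; exact hA s hs)
    have i2 : Q s * (Q s)⁻¹ = 1 := Matrix.mul_nonsing_inv _ (hQinv s hs.le)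
    have i3 : A s * (A s)⁻¹ = 1 := Matrix.mul_nonsing_inv _ (hA s hs)
    have c1 : A s * Q s * (A s)ᵀ * (((A s)ᵀ)⁻¹ * ((Q s)⁻¹ * (A s)⁻¹)) = 1 := by
      calc A s * Q s * (A s)ᵀ * (((A s)ᵀ)⁻¹ * ((Q s)⁻¹ * (A s)⁻¹))
          = A s * (Q s * (((A s)ᵀ * ((A s)ᵀ)⁻¹) * ((Q s)⁻¹ * (A s)⁻¹))) := by noncomm_ring
        _ = A s * (Q s * ((Q s)⁻¹ * (A s)⁻¹)) := by rw [i1, Matrix.one_mul]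
        _ = A s * ((Q s * (Q s)⁻¹) * (A s)⁻¹) := by noncomm_ring
        _ = 1 := by rw [i2, Matrix.one_mul, i3]
    calc (1 : Matrix (Fin n) (Fin n) ℝ) - D s * (Q (s+1))⁻¹
        = ((1 : Matrix (Fin n) (Fin n) ℝ) - D s * (Q (s+1))⁻¹) * 1 := by rw [Matrix.mul_one]
      _ = ((1 : Matrix (Fin n) (Fin n) ℝ) - D s * (Q (s+1))⁻¹)
            * (A s * Q s * (A s)ᵀ * (((A s)ᵀ)⁻¹ * ((Q s)⁻¹ * (A s)⁻¹))) := by rw [c1]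
      _ = ((1 : Matrix (Fin n) (Fin n) ℝ) - D s * (Q (s+1))⁻¹) * (A s * Q s * (A s)ᵀ)
            * (((A s)ᵀ)⁻¹ * ((Q s)⁻¹ * (A s)⁻¹)) := by noncomm_ring
      _ = Q (s+1) * (((A s)ᵀ)⁻¹ * ((Q s)⁻¹ * (A s)⁻¹)) := by rw [h1]
  have hAQf : ∀ s, s < N → AQ s = Q (s+1) * (((A s)ᵀ)⁻¹ * (Q s)⁻¹) := by
    intro s hs
    have h0 : AQ s = ((1 : Matrix (Fin n) (Fin n) ℝ) - D s * (Q (s+1))⁻¹) * A s := by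
      rw [hAQ s, hD s]
      simp only [Matrix.sub_mul, Matrix.one_mul, Matrix.mul_assoc]
    have i3 : (A s)⁻¹ * A s = 1 := Matrix.nonsing_inv_mul _ (hA s hs)
    rw [h0, hX s hs]
    calc Q (s+1) * (((A s)ᵀ)⁻¹ * ((Q s)⁻¹ * (A s)⁻¹)) * A s
        = Q (s+1) * (((A s)ᵀ)⁻¹ * ((Q s)⁻¹ * ((A s)⁻¹ * A s))) := by noncomm_ring
      _ = Q (s+1) * (((A s)ᵀ)⁻¹ * (Q s)⁻¹) := by rw [i3, Matrix.mul_one]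
  have hDQ : ∀ s, s < N → (Q (s+1))⁻¹ * (D s * (Q (s+1))⁻¹)
      = (Q (s+1))⁻¹ - ((A s)ᵀ)⁻¹ * ((Q s)⁻¹ * (A s)⁻¹) := by
    intro s hs
    have hq : (Q (s+1))⁻¹ * Q (s+1) = 1 := Matrix.nonsing_inv_mul _ (hQinv (s+1) hs)
    calc (Q (s+1))⁻¹ * (D s * (Q (s+1))⁻¹)
        = (Q (s+1))⁻¹ - (Q (s+1))⁻¹ * (1 - D s * (Q (s+1))⁻¹) := by noncomm_ring
      _ = (Q (s+1))⁻¹ - (Q (s+1))⁻¹ * (Q (s+1) * (((A s)ᵀ)⁻¹ * ((Q s)⁻¹ * (A s)⁻¹))) := by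
          rw [hX s hs]
      _ = (Q (s+1))⁻¹ - ((A s)ᵀ)⁻¹ * ((Q s)⁻¹ * (A s)⁻¹) := by
          rw [← Matrix.mul_assoc, hq, Matrix.one_mul]
  -- ======= Phi AQ formula =======
  have hPhiQaux : ∀ d j, j + d = N →
      Phi AQ N j = Q N * (((Phi A N j)ᵀ)⁻¹ * (Q j)⁻¹) := by
    intro d
    induction d with
    | zero =>
        intro j hj
        have hjN : N = j := by omega
        subst hjN
        rw [Phi_self, Phi_self, Matrix.transpose_one, inv_one, Matrix.one_mul]
        exact (Matrix.mul_nonsing_inv _ (hQinv N le_rfl)).symm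
    | succ d ih =>
        intro j hj
        have hjN : j < N := by omega
        have h1 : Phi AQ N j = Phi AQ N (j+1) * AQ j := (Phi_mul_A AQ hjN).symm
        rw [h1, ih (j+1) (by omega), hAQf j hjN]
        have hq : (Q (j+1))⁻¹ * Q (j+1) = 1 := Matrix.nonsing_inv_mul _ (hQinv (j+1) hjN)
        have hinv : ((Phi A N (j+1))ᵀ)⁻¹ * ((A j)ᵀ)⁻¹ = ((Phi A N j)ᵀ)⁻¹ := by
          rw [← Matrix.mul_inv_rev, ← Matrix.transpose_mul, Phi_mul_A A hjN]
        calc Q N * (((Phi A N (j+1))ᵀ)⁻¹ * (Q (j+1))⁻¹) * (Q (j+1) * (((A j)ᵀ)⁻¹ * (Q j)⁻¹))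
            = Q N * (((Phi A N (j+1))ᵀ)⁻¹ * (((Q (j+1))⁻¹ * Q (j+1))
                * (((A j)ᵀ)⁻¹ * (Q j)⁻¹))) := by noncomm_ring
          _ = Q N * ((((Phi A N (j+1))ᵀ)⁻¹ * ((A j)ᵀ)⁻¹) * (Q j)⁻¹) := by
              rw [hq]; noncomm_ring
          _ = Q N * (((Phi A N j)ᵀ)⁻¹ * (Q j)⁻¹) := by rw [hinv]
  have hPhiQf : ∀ j, j ≤ N → Phi AQ N j = Q N * (((Phi A N j)ᵀ)⁻¹ * (Q j)⁻¹) :=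
    fun j hj => hPhiQaux (N - j) j (by omega)
  -- ======= telescoping 1 =======
  have tele1 : ∀ d j, j + d = N →
      GrM A (fun s => B s * (B s)ᵀ) N j = Phi A N j * Q j * (Phi A N j)ᵀ - Q N := by
    intro d
    induction d with
    | zero =>
        intro j hj
        have hjN : N = j := by omega
        subst hjN
        simp [GrM, Phi_self]
    | succ d ih =>
        intro j hj
        have hjN : j < N := by omega
        have hsplit : GrM A (fun s => B s * (B s)ᵀ) N j
            = Phi A N (j+1) * (B j * (B j)ᵀ) * (Phi A N (j+1))ᵀ
              + GrM A (fun s => B s * (B s)ᵀ) N (j+1) := by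
          simp only [GrM]
          rw [Finset.sum_eq_sum_Ico_succ_bot hjN]
        rw [hsplit, ih (j+1) (by omega)]
        have hBB : B j * (B j)ᵀ = A j * Q j * (A j)ᵀ - Q (j+1) := by
          rw [hQrec j hjN]; noncomm_ring
        rw [hBB]
        have hP : Phi A N (j+1) * A j = Phi A N j := Phi_mul_A A hjN
        calc Phi A N (j+1) * (A j * Q j * (A j)ᵀ - Q (j+1)) * (Phi A N (j+1))ᵀ
              + (Phi A N (j+1) * Q (j+1) * (Phi A N (j+1))ᵀ - Q N)
            = (Phi A N (j+1) * A j) * Q j * (Phi A N (j+1) * A j)ᵀ - Q N := by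
              simp only [Matrix.transpose_mul]; noncomm_ring
          _ = Phi A N j * Q j * (Phi A N j)ᵀ - Q N := by rw [hP]
  -- ======= telescoping 2 =======
  have tele2 : ∀ d j, j + d = N →
      GrM AQ D N j
        = Q N - Q N * (((Phi A N j)ᵀ)⁻¹ * ((Q j)⁻¹ * ((Phi A N j)⁻¹ * Q N))) := by
    intro d
    induction d with
    | zero =>
        intro j hj
        have hjN : N = j := by omega
        subst hjN
        have hq : (Q N)⁻¹ * Q N = 1 := Matrix.nonsing_inv_mul _ (hQinv N le_rfl)
        simp only [GrM, Finset.Ico_self, Finset.sum_empty, Phi_self, Matrix.transpose_one,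
          inv_one, Matrix.one_mul]
        rw [hq, Matrix.mul_one]
        simp
    | succ d ih =>
        intro j hj
        have hjN : j < N := by omega
        have hsplit : GrM AQ D N j
            = Phi AQ N (j+1) * D j * (Phi AQ N (j+1))ᵀ + GrM AQ D N (j+1) := by
          simp only [GrM]
          rw [Finset.sum_eq_sum_Ico_succ_bot hjN]
        have hf : Phi AQ N (j+1) = Q N * (((Phi A N (j+1))ᵀ)⁻¹ * (Q (j+1))⁻¹) :=
          hPhiQf (j+1) hjN
        have hft : (Phi AQ N (j+1))ᵀ = (Q (j+1))⁻¹ * ((Phi A N (j+1))⁻¹ * Q N) := by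
          rw [hf]
          simp only [Matrix.transpose_mul, Matrix.transpose_nonsing_inv,
            Matrix.transpose_transpose, hQsym N le_rfl, hQsym (j+1) hjN]
          noncomm_ring
        have hinv1 : ((Phi A N (j+1))ᵀ)⁻¹ * ((A j)ᵀ)⁻¹ = ((Phi A N j)ᵀ)⁻¹ := by
          rw [← Matrix.mul_inv_rev, ← Matrix.transpose_mul, Phi_mul_A A hjN]
        have hinv2 : (A j)⁻¹ * (Phi A N (j+1))⁻¹ = (Phi A N j)⁻¹ := by
          rw [← Matrix.mul_inv_rev, Phi_mul_A A hjN]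
        have hterm : Phi AQ N (j+1) * D j * (Phi AQ N (j+1))ᵀ
            = Q N * (((Phi A N (j+1))ᵀ)⁻¹ * ((Q (j+1))⁻¹ * ((Phi A N (j+1))⁻¹ * Q N)))
              - Q N * (((Phi A N j)ᵀ)⁻¹ * ((Q j)⁻¹ * ((Phi A N j)⁻¹ * Q N))) := by
          calc Phi AQ N (j+1) * D j * (Phi AQ N (j+1))ᵀ
              = Q N * (((Phi A N (j+1))ᵀ)⁻¹ * (((Q (j+1))⁻¹ * (D j * (Q (j+1))⁻¹))
                  * ((Phi A N (j+1))⁻¹ * Q N))) := by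
                rw [hft, hf]; noncomm_ring
            _ = Q N * (((Phi A N (j+1))ᵀ)⁻¹ * (((Q (j+1))⁻¹
                  - ((A j)ᵀ)⁻¹ * ((Q j)⁻¹ * (A j)⁻¹)) * ((Phi A N (j+1))⁻¹ * Q N))) := by
                rw [hDQ j hjN]
            _ = Q N * (((Phi A N (j+1))ᵀ)⁻¹ * ((Q (j+1))⁻¹ * ((Phi A N (j+1))⁻¹ * Q N)))
                  - Q N * ((((Phi A N (j+1))ᵀ)⁻¹ * ((A j)ᵀ)⁻¹)
                    * ((Q j)⁻¹ * (((A j)⁻¹ * (Phi A N (j+1))⁻¹) * Q N))) := by noncomm_ring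
            _ = _ := by rw [hinv1, hinv2]
        rw [hsplit, hterm, ih (j+1) (by omega)]
        noncomm_ring
  -- ======= instantiate at k =======
  have hG0 : GrM A (fun s => B s * (B s)ᵀ) N k = Phi A N k * Q k * (Phi A N k)ᵀ - Q N :=
    tele1 (N - k) k (by omega)
  have hGQ0 : GrM AQ D N k
      = Q N - Q N * (((Phi A N k)ᵀ)⁻¹ * ((Q k)⁻¹ * ((Phi A N k)⁻¹ * Q N))) :=
    tele2 (N - k) k (by omega)
  have hΦQ0 : Phi AQ N (k+1) = Q N * (((Phi A N (k+1))ᵀ)⁻¹ * (Q (k+1))⁻¹) := hPhiQf (k+1) hk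
  have hΨΦ : Phi A N (k+1) * A k = Phi A N k := Phi_mul_A A hk
  have hΦQAQ0 : Phi AQ N (k+1) * AQ k = Q N * (((Phi A N k)ᵀ)⁻¹ * (Q k)⁻¹) := by
    rw [Phi_mul_A AQ hk]; exact hPhiQf k hk.le
  have hmp := hGrd k hk
  have hmpQ := hGQrd k hk
  have hbk := hb k hk
  have hAQAk := hAQA k hk
  have hDsymk := hDsym k hk
  -- determinants
  have uΦ : IsUnit (Phi A N (k+1)).det := isUnit_det_Phi A (by omega) hA
  have uΨ : IsUnit (Phi A N k).det := isUnit_det_Phi A hk.le hA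
  have uQk : IsUnit (Q k).det := hQinv k hk.le
  have uQk1 : IsUnit (Q (k+1)).det := hQinv (k+1) hk
  have uQN : IsUnit (Q N).det := hQinv N le_rfl
  -- ======= abbreviations =======
  set Φ := Phi A N (k+1) with hΦdef
  set Ψ := Phi A N k with hΨdef
  set ΦQ := Phi AQ N (k+1) with hΦQdef
  set G := GrM A (fun s => B s * (B s)ᵀ) N k with hGdef
  set Gd := Grd k with hGddef
  set S := B k * (B k)ᵀ with hSdef
  set P := Ψ * Q k * Ψᵀ with hPdef
  -- basic inverse facts
  have inv1 : Φ * Φ⁻¹ = 1 := Matrix.mul_nonsing_inv _ uΦ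
  have inv2 : Φ⁻¹ * Φ = 1 := Matrix.nonsing_inv_mul _ uΦ
  have iΨ1 : Ψ * Ψ⁻¹ = 1 := Matrix.mul_nonsing_inv _ uΨ
  have iΨ2 : Ψ⁻¹ * Ψ = 1 := Matrix.nonsing_inv_mul _ uΨ
  have tΦ1 : Φᵀ * (Φᵀ)⁻¹ = 1 := Matrix.mul_nonsing_inv _ (by rw [Matrix.det_transpose]; exact uΦ)
  have tΨ1 : Ψᵀ * (Ψᵀ)⁻¹ = 1 := Matrix.mul_nonsing_inv _ (by rw [Matrix.det_transpose]; exact uΨ)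
  have tΨ2 : (Ψᵀ)⁻¹ * Ψᵀ = 1 := Matrix.nonsing_inv_mul _ (by rw [Matrix.det_transpose]; exact uΨ)
  have qk1 : Q k * (Q k)⁻¹ = 1 := Matrix.mul_nonsing_inv _ uQk
  have qk2 : (Q k)⁻¹ * Q k = 1 := Matrix.nonsing_inv_mul _ uQk
  have qp1 : Q (k+1) * (Q (k+1))⁻¹ = 1 := Matrix.mul_nonsing_inv _ uQk1
  have qp2 : (Q (k+1))⁻¹ * Q (k+1) = 1 := Matrix.nonsing_inv_mul _ uQk1
  have qn1 : Q N * (Q N)⁻¹ = 1 := Matrix.mul_nonsing_inv _ uQN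
  have qn2 : (Q N)⁻¹ * Q N = 1 := Matrix.nonsing_inv_mul _ uQN
  have hΨT : Ψᵀ = (A k)ᵀ * Φᵀ := by rw [← hΨΦ, Matrix.transpose_mul]
  have hSsym : Sᵀ = S := by rw [hSdef]; simp [Matrix.transpose_mul]
  -- G facts
  have hG1 : G = P - Q N := hG0
  have hPG : P = G + Q N := by rw [hG1]; noncomm_ring
  have hQNPG : Q N = P - G := by rw [hG1]; noncomm_ring
  have hGsym : Gᵀ = G := by
    rw [hG1, hPdef]
    simp only [Matrix.transpose_sub, Matrix.transpose_mul, Matrix.transpose_transpose,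
      hQsym k hk.le, hQsym N le_rfl]
    noncomm_ring
  obtain ⟨m1, m2, m3, m4⟩ := hmp
  have hGdsym : Gdᵀ = Gd := mp_symm hGsym ⟨m1, m2, m3, m4⟩
  have hGdG : Gd * G = G * Gd := by
    have h := Matrix.transpose_mul G Gd
    rw [m3, hGdsym, hGsym] at h
    exact h.symm
  have hGPr : G * (G * Gd) = G := by
    rw [← hGdG, ← Matrix.mul_assoc]; exact m1
  have hPrG : (G * Gd) * G = G := m1
  have hPr2 : (G * Gd) * (G * Gd) = G * Gd := by
    rw [← Matrix.mul_assoc, m1]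
  have hPrGd : (G * Gd) * Gd = Gd := by rw [← hGdG]; exact m2
  have hGdPr : Gd * (G * Gd) = Gd := by rw [← Matrix.mul_assoc]; exact m2
  -- E and the kernel fact
  set E := (1 : Matrix (Fin n) (Fin n) ℝ) - G * Gd with hEdef
  have hGE : G * E = 0 := by
    rw [hEdef, Matrix.mul_sub, Matrix.mul_one, hGPr, sub_self]
  have hET : Eᵀ = E := by
    rw [hEdef]
    simp [Matrix.transpose_sub, Matrix.transpose_one, m3]
  have hEG : E * G = 0 := by
    have h := congrArg Matrix.transpose hGE
    rwa [Matrix.transpose_mul, hET, hGsym, Matrix.transpose_zero] at h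
  have hGsum : G = ∑ i ∈ Finset.Ico k N, (Phi A N (i+1) * B i) * (Phi A N (i+1) * B i)ᵀ := by
    rw [hGdef]
    simp only [GrM]
    refine Finset.sum_congr rfl fun i _ => ?_
    simp [Matrix.transpose_mul, Matrix.mul_assoc]
  have hzero : Eᵀ * (∑ i ∈ Finset.Ico k N, (Phi A N (i+1) * B i) * (Phi A N (i+1) * B i)ᵀ) * E
      = 0 := by
    rw [← hGsum, hET, Matrix.mul_assoc, hGE, Matrix.mul_zero]
  have hkey := sum_gram_zero _ _ _ hzero k (Finset.mem_Ico.mpr ⟨le_rfl, hk⟩)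
  rw [Matrix.transpose_mul] at hkey
  have hSE : S * (Φᵀ * E) = 0 := by
    have h2 : S * (Φᵀ * E) = B k * ((B k)ᵀ * Φᵀ * E) := by
      rw [hSdef]; simp [Matrix.mul_assoc]
    rw [h2, hkey, Matrix.mul_zero]
  -- X, Y and key identities
  set X := D k * ((Q (k+1))⁻¹ * Φ⁻¹) with hXdef
  set Y := (Φᵀ)⁻¹ * ((Q (k+1))⁻¹ * D k) with hYdef
  have hbk' : D k + D k * (Q (k+1))⁻¹ * S = S := hbk
  have hK1 : X * P = S * Φᵀ := by
    calc X * P = D k * ((Q (k+1))⁻¹ * ((Φ⁻¹ * Ψ) * (Q k * Ψᵀ))) := by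
          rw [hXdef, hPdef]; noncomm_ring
      _ = D k * ((Q (k+1))⁻¹ * ((Φ⁻¹ * (Φ * A k)) * (Q k * ((A k)ᵀ * Φᵀ)))) := by
          rw [← hΨT, hΨΦ]
      _ = D k * ((Q (k+1))⁻¹ * (((Φ⁻¹ * Φ) * (A k * Q k * (A k)ᵀ)) * Φᵀ)) := by noncomm_ring
      _ = D k * ((Q (k+1))⁻¹ * ((A k * Q k * (A k)ᵀ) * Φᵀ)) := by
          rw [inv2, Matrix.one_mul]
      _ = D k * ((Q (k+1))⁻¹ * ((Q (k+1) + S) * Φᵀ)) := by rw [hAQAk]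
      _ = D k * (((Q (k+1))⁻¹ * Q (k+1)) * Φᵀ) + D k * (Q (k+1))⁻¹ * S * Φᵀ := by noncomm_ring
      _ = D k * Φᵀ + D k * (Q (k+1))⁻¹ * S * Φᵀ := by rw [qp2, Matrix.one_mul]
      _ = (D k + D k * (Q (k+1))⁻¹ * S) * Φᵀ := by noncomm_ring
      _ = S * Φᵀ := by rw [hbk']
  have hK0 : X * (Q N * E) = 0 := by
    have h1 : X * (Q N * E) = S * (Φᵀ * E) - X * (G * E) := by
      calc X * (Q N * E) = (X * P) * E - X * (G * E) := by rw [hQNPG]; noncomm_ring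
        _ = (S * Φᵀ) * E - X * (G * E) := by rw [hK1]
        _ = S * (Φᵀ * E) - X * (G * E) := by noncomm_ring
    rw [h1, hGE, hSE, Matrix.mul_zero, sub_zero]
  have hXΨ : X * Ψ = A k - AQ k := by
    calc X * Ψ = D k * ((Q (k+1))⁻¹ * (Φ⁻¹ * (Φ * A k))) := by
          rw [hXdef, hΨΦ]; noncomm_ring
      _ = D k * ((Q (k+1))⁻¹ * ((Φ⁻¹ * Φ) * A k)) := by noncomm_ring
      _ = D k * ((Q (k+1))⁻¹ * A k) := by rw [inv2, Matrix.one_mul]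
      _ = A k - AQ k := by
          rw [hAQ k, hD k, sub_sub_cancel]
          simp only [Matrix.mul_assoc]
  have hXT : Xᵀ = Y := by
    rw [hXdef, hYdef]
    simp only [Matrix.transpose_mul, Matrix.transpose_nonsing_inv, hQsym (k+1) hk, hDsymk]
    noncomm_ring
  have hΦQT : ΦQᵀ = (Q (k+1))⁻¹ * (Φ⁻¹ * Q N) := by
    rw [hΦQ0]
    simp only [Matrix.transpose_mul, Matrix.transpose_nonsing_inv, Matrix.transpose_transpose,
      hQsym N le_rfl, hQsym (k+1) hk]
    noncomm_ring
  have hDΦQT : D k * ΦQᵀ = X * Q N := by rw [hΦQT, hXdef]; noncomm_ring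
  have hΦQD : ΦQ * D k = Q N * Y := by rw [hΦQ0, hYdef]; noncomm_ring
  -- ======= Moore-Penrose inverse of the closed-loop Gramian =======
  set Pi' := (Ψᵀ)⁻¹ * ((Q k)⁻¹ * Ψ⁻¹) with hPi'def
  set GQm := Q N - Q N * (((Ψ)ᵀ)⁻¹ * ((Q k)⁻¹ * (Ψ⁻¹ * Q N))) with hGQmdef
  set H := Gd + (G * Gd) * ((Q N)⁻¹ * (G * Gd)) with hHdef
  have hPPi' : P * Pi' = 1 := by
    calc P * Pi' = Ψ * (Q k * ((Ψᵀ * (Ψᵀ)⁻¹) * ((Q k)⁻¹ * Ψ⁻¹))) := by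
          rw [hPdef, hPi'def]; noncomm_ring
      _ = Ψ * ((Q k * (Q k)⁻¹) * Ψ⁻¹) := by rw [tΨ1]; noncomm_ring
      _ = 1 := by rw [qk1, Matrix.one_mul, iΨ1]
  have hPi'P : Pi' * P = 1 := by
    calc Pi' * P = (Ψᵀ)⁻¹ * ((Q k)⁻¹ * ((Ψ⁻¹ * Ψ) * (Q k * Ψᵀ))) := by
          rw [hPdef, hPi'def]; noncomm_ring
      _ = (Ψᵀ)⁻¹ * (((Q k)⁻¹ * Q k) * Ψᵀ) := by rw [iΨ2]; noncomm_ring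
      _ = 1 := by rw [qk2, Matrix.one_mul, tΨ2]
  have f1 : Q N * (Pi' * G) = GQm := by
    calc Q N * (Pi' * G) = Q N * (Pi' * P) - Q N * (Pi' * Q N) := by rw [hG1]; noncomm_ring
      _ = Q N - Q N * (Pi' * Q N) := by rw [hPi'P, Matrix.mul_one]
      _ = GQm := by rw [hGQmdef, hPi'def]; noncomm_ring
  have f2 : (G * Pi') * Q N = GQm := by
    calc (G * Pi') * Q N = (P * Pi') * Q N - Q N * Pi' * Q N := by rw [hG1]; noncomm_ring
      _ = Q N - Q N * Pi' * Q N := by rw [hPPi', Matrix.one_mul]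
      _ = GQm := by rw [hGQmdef, hPi'def]; noncomm_ring
  have comb1 : (Q N + G) * ((Q N)⁻¹ * (G * Gd)) = G * Gd + G * ((Q N)⁻¹ * (G * Gd)) := by
    calc (Q N + G) * ((Q N)⁻¹ * (G * Gd))
        = (Q N * (Q N)⁻¹) * (G * Gd) + G * ((Q N)⁻¹ * (G * Gd)) := by noncomm_ring
      _ = G * Gd + G * ((Q N)⁻¹ * (G * Gd)) := by rw [qn1, Matrix.one_mul]
  have ax1' : GQm * H = G * Gd := by
    calc GQm * H
        = Q N * (Pi' * (G * Gd + (G * (G * Gd)) * ((Q N)⁻¹ * (G * Gd)))) := by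
          rw [← f1, hHdef]; noncomm_ring
      _ = Q N * (Pi' * (G * Gd + G * ((Q N)⁻¹ * (G * Gd)))) := by rw [hGPr]
      _ = Q N * (Pi' * ((Q N + G) * ((Q N)⁻¹ * (G * Gd)))) := by rw [comb1]
      _ = Q N * ((Pi' * P) * ((Q N)⁻¹ * (G * Gd))) := by
          rw [hPG]; noncomm_ring
      _ = (Q N * (Q N)⁻¹) * (G * Gd) := by rw [hPi'P]; noncomm_ring
      _ = G * Gd := by rw [qn1, Matrix.one_mul]
  have comb2 : ((Q N)⁻¹ * (Q N + G)) * (Pi' * Q N)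
      = Pi' * Q N + ((Q N)⁻¹ * G) * (Pi' * Q N) := by
    calc ((Q N)⁻¹ * (Q N + G)) * (Pi' * Q N)
        = ((Q N)⁻¹ * Q N) * (Pi' * Q N) + ((Q N)⁻¹ * G) * (Pi' * Q N) := by noncomm_ring
      _ = Pi' * Q N + ((Q N)⁻¹ * G) * (Pi' * Q N) := by rw [qn2, Matrix.one_mul]
  have ax2' : H * GQm = G * Gd := by
    calc H * GQm
        = (Gd * G) * (Pi' * Q N) + (G * Gd) * ((Q N)⁻¹ * (((G * Gd) * G) * (Pi' * Q N))) := by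
          rw [← f2, hHdef]; noncomm_ring
      _ = (G * Gd) * (Pi' * Q N) + (G * Gd) * ((Q N)⁻¹ * (G * (Pi' * Q N))) := by
          rw [hGdG, hPrG]
      _ = (G * Gd) * (((Q N)⁻¹ * (Q N + G)) * (Pi' * Q N)) := by rw [comb2]; noncomm_ring
      _ = (G * Gd) * (((Q N)⁻¹ * P) * (Pi' * Q N)) := by rw [hPG]; noncomm_ring
      _ = (G * Gd) * ((Q N)⁻¹ * ((P * Pi') * Q N)) := by noncomm_ring
      _ = (G * Gd) * ((Q N)⁻¹ * Q N) := by rw [hPPi', Matrix.one_mul]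
      _ = G * Gd := by rw [qn2, Matrix.mul_one]
  have ax1 : GQm * H * GQm = GQm := by
    rw [ax1', ← f2]
    calc (G * Gd) * ((G * Pi') * Q N) = ((G * Gd) * G) * (Pi' * Q N) := by noncomm_ring
      _ = G * (Pi' * Q N) := by rw [hPrG]
      _ = (G * Pi') * Q N := by noncomm_ring
  have ax2 : H * GQm * H = H := by
    rw [ax2', hHdef]
    calc (G * Gd) * (Gd + (G * Gd) * ((Q N)⁻¹ * (G * Gd)))
        = (G * Gd) * Gd + ((G * Gd) * (G * Gd)) * ((Q N)⁻¹ * (G * Gd)) := by noncomm_ring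
      _ = Gd + (G * Gd) * ((Q N)⁻¹ * (G * Gd)) := by rw [hPrGd, hPr2]
  have ax3 : (GQm * H)ᵀ = GQm * H := by rw [ax1', m3]
  have ax4 : (H * GQm)ᵀ = H * GQm := by rw [ax2', m3]
  have hmpQ' : IsMoorePenrose GQm (GQrd k) := by
    rw [← hGQ0]; exact hmpQ
  have hGQrdk : GQrd k = H := mp_unique hmpQ' ⟨ax1, ax2, ax3, ax4⟩
  -- ======= the Z identity =======
  have hZ : P * (Gd * P) - P + (Q N * E) * ((Q N)⁻¹ * (E * Q N)) = Q N * (H * Q N) := by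
    calc P * (Gd * P) - P + (Q N * E) * ((Q N)⁻¹ * (E * Q N))
        = (G * Gd) * G + (G * Gd) * Q N + Q N * (Gd * G) + Q N * (Gd * Q N) - G - Q N
          + ((Q N * (Q N)⁻¹) * Q N - (Q N * (Q N)⁻¹) * ((G * Gd) * Q N)
            - (Q N * (G * Gd)) * ((Q N)⁻¹ * Q N)
            + Q N * ((G * Gd) * ((Q N)⁻¹ * ((G * Gd) * Q N)))) := by
          rw [hPG, hEdef]; noncomm_ring
      _ = G + (G * Gd) * Q N + Q N * (G * Gd) + Q N * (Gd * Q N) - G - Q N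
          + (Q N - (G * Gd) * Q N - Q N * (G * Gd)
            + Q N * ((G * Gd) * ((Q N)⁻¹ * ((G * Gd) * Q N)))) := by
          rw [hPrG, hGdG, qn1, qn2]
          simp only [Matrix.one_mul, Matrix.mul_one]
      _ = Q N * (Gd * Q N) + Q N * ((G * Gd) * ((Q N)⁻¹ * ((G * Gd) * Q N))) := by noncomm_ring
      _ = Q N * (H * Q N) := by rw [hHdef]; noncomm_ring
  have hPinv : P * ((Ψᵀ)⁻¹ * (Q k)⁻¹) = Ψ := by
    calc P * ((Ψᵀ)⁻¹ * (Q k)⁻¹) = Ψ * (Q k * ((Ψᵀ * (Ψᵀ)⁻¹) * (Q k)⁻¹)) := by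
          rw [hPdef]; noncomm_ring
      _ = Ψ * (Q k * (Q k)⁻¹) := by rw [tΨ1, Matrix.one_mul]
      _ = Ψ := by rw [qk1, Matrix.mul_one]
  constructor
  -- ======= drift identity =======
  · have key1 : D k * ΦQᵀ * GQrd k * ΦQ * AQ k = S * (Φᵀ * (Gd * Ψ)) - X * Ψ := by
      calc D k * ΦQᵀ * GQrd k * ΦQ * AQ k
          = (D k * ΦQᵀ) * GQrd k * (ΦQ * AQ k) := by noncomm_ring
        _ = (X * Q N) * H * (Q N * (((Ψ)ᵀ)⁻¹ * (Q k)⁻¹)) := by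
            rw [hDΦQT, hΦQAQ0, hGQrdk]
        _ = X * (Q N * (H * Q N)) * ((Ψᵀ)⁻¹ * (Q k)⁻¹) := by noncomm_ring
        _ = X * (P * (Gd * P) - P + (Q N * E) * ((Q N)⁻¹ * (E * Q N)))
              * ((Ψᵀ)⁻¹ * (Q k)⁻¹) := by rw [← hZ]
        _ = X * (P * (Gd * (P * ((Ψᵀ)⁻¹ * (Q k)⁻¹)))) - X * (P * ((Ψᵀ)⁻¹ * (Q k)⁻¹))
              + (X * (Q N * E)) * ((Q N)⁻¹ * ((E * Q N) * ((Ψᵀ)⁻¹ * (Q k)⁻¹))) := by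
            noncomm_ring
        _ = X * (P * (Gd * Ψ)) - X * Ψ + 0 := by rw [hPinv, hK0, Matrix.zero_mul]
        _ = (X * P) * (Gd * Ψ) - X * Ψ := by noncomm_ring
        _ = S * (Φᵀ * (Gd * Ψ)) - X * Ψ := by rw [hK1]; noncomm_ring
    calc (1 - S * Φᵀ * Gd * Φ) * A k
        = A k - S * (Φᵀ * (Gd * (Φ * A k))) := by noncomm_ring
      _ = A k - S * (Φᵀ * (Gd * Ψ)) := by rw [hΨΦ]
      _ = AQ k + (X * Ψ) - S * (Φᵀ * (Gd * Ψ)) := by rw [hXΨ]; noncomm_ring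
      _ = AQ k - (S * (Φᵀ * (Gd * Ψ)) - X * Ψ) := by noncomm_ring
      _ = AQ k - D k * ΦQᵀ * GQrd k * ΦQ * AQ k := by rw [key1]
      _ = (1 - D k * ΦQᵀ * GQrd k * ΦQ) * AQ k := by noncomm_ring
  -- ======= covariance identity =======
  · have hb'k : D k + S * ((Q (k+1))⁻¹ * D k) = S := by
      have h := congrArg Matrix.transpose hbk'
      simp only [Matrix.transpose_add, Matrix.transpose_mul, Matrix.transpose_nonsing_inv] at h
      rw [hQsym (k+1) hk, hDsymk, hSsym] at h
      exact h
    have hK1' : P * Y = Φ * S := by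
      calc P * Y = Ψ * (Q k * ((A k)ᵀ * ((Φᵀ * (Φᵀ)⁻¹) * ((Q (k+1))⁻¹ * D k)))) := by
            rw [hPdef, hYdef, hΨT]; noncomm_ring
        _ = Ψ * (Q k * ((A k)ᵀ * ((Q (k+1))⁻¹ * D k))) := by rw [tΦ1, Matrix.one_mul]
        _ = (Φ * (A k * Q k * (A k)ᵀ)) * ((Q (k+1))⁻¹ * D k) := by
            rw [← hΨΦ]; noncomm_ring
        _ = (Φ * (Q (k+1) + S)) * ((Q (k+1))⁻¹ * D k) := by rw [hAQAk]
        _ = Φ * ((Q (k+1) * (Q (k+1))⁻¹) * D k) + Φ * (S * ((Q (k+1))⁻¹ * D k)) := by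
            noncomm_ring
        _ = Φ * (D k + S * ((Q (k+1))⁻¹ * D k)) := by rw [qp1, Matrix.one_mul]; noncomm_ring
        _ = Φ * S := by rw [hb'k]
    have key2 : D k * ΦQᵀ * GQrd k * (ΦQ * D k)
        = S * (Φᵀ * (Gd * (Φ * S))) - S * ((Q (k+1))⁻¹ * D k) := by
      calc D k * ΦQᵀ * GQrd k * (ΦQ * D k)
          = (X * Q N) * H * (Q N * Y) := by rw [hDΦQT, hΦQD, hGQrdk]
        _ = X * (Q N * (H * Q N)) * Y := by noncomm_ring
        _ = X * (P * (Gd * P) - P + (Q N * E) * ((Q N)⁻¹ * (E * Q N))) * Y := by rw [← hZ]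
        _ = X * (P * (Gd * (P * Y))) - X * (P * Y)
              + (X * (Q N * E)) * ((Q N)⁻¹ * ((E * Q N) * Y)) := by noncomm_ring
        _ = X * (P * (Gd * (Φ * S))) - X * (P * Y) + 0 := by
            rw [hK1', hK0, Matrix.zero_mul]
        _ = (X * P) * (Gd * (Φ * S)) - (X * P) * Y := by noncomm_ring
        _ = (S * Φᵀ) * (Gd * (Φ * S)) - (S * Φᵀ) * Y := by rw [hK1]
        _ = S * (Φᵀ * (Gd * (Φ * S))) - S * ((Φᵀ * (Φᵀ)⁻¹) * ((Q (k+1))⁻¹ * D k)) := by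
            rw [hYdef]; noncomm_ring
        _ = S * (Φᵀ * (Gd * (Φ * S))) - S * ((Q (k+1))⁻¹ * D k) := by
            rw [tΦ1, Matrix.one_mul]
    have hassoc : S * Φᵀ * Gd * Φ * B k * (B k)ᵀ = S * (Φᵀ * (Gd * (Φ * S))) := by
      rw [hSdef]; simp only [Matrix.mul_assoc]
    calc S - S * Φᵀ * Gd * Φ * B k * (B k)ᵀ
        = S - S * (Φᵀ * (Gd * (Φ * S))) := by rw [hassoc]
      _ = D k + S * ((Q (k+1))⁻¹ * D k) - S * (Φᵀ * (Gd * (Φ * S))) := by rw [hb'k]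
      _ = D k - (S * (Φᵀ * (Gd * (Φ * S))) - S * ((Q (k+1))⁻¹ * D k)) := by noncomm_ring
      _ = D k - D k * ΦQᵀ * GQrd k * (ΦQ * D k) := by rw [key2]
      _ = D k - D k * ΦQᵀ * GQrd k * ΦQ * D k := by noncomm_ring

end
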